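/- Let L be a Boolean algebra with a faithful probability measure φ containing at least two distinct atoms P and Q. Then there exist two distinct elements A, B ∈ L with φ(A ∧ B) > φ(A)·φ(B) if and only if φ(P ∨ Q) < 1. -/

import Mathlib

/-!
If `φ (P ⊔ Q) < 1`, then `P < P ⊔ Q` is a positively correlated pair, since
`φ (P ⊓ (P ⊔ Q)) = φ P > φ P * φ (P ⊔ Q)`. If instead `φ (P ⊔ Q) = 1`, faithfulness forces
`P ⊔ Q = ⊤`, so `L = {⊥, P, Q, ⊤}`; two distinct elements of this algebra are either disjoint or
one of them is `⊤`, and in neither case can they be positively correlated.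
-/

section Lattice

variable {L : Type*} [BooleanAlgebra L] {P Q : L}

theorem IsAtom.eq_bot_or_eq_or_eq_or_eq_top_of_sup_eq_top (hP : IsAtom P) (hQ : IsAtom Q)
    (hPQ : P ⊔ Q = ⊤) (X : L) : X = ⊥ ∨ X = P ∨ X = Q ∨ X = ⊤ := by
  have hX : X = X ⊓ P ⊔ X ⊓ Q := by rw [← inf_sup_left, hPQ, inf_top_eq]
  rcases hP.le_iff.mp (inf_le_right : X ⊓ P ≤ P) with hXP | hXP <;>
    rcases hQ.le_iff.mp (inf_le_right : X ⊓ Q ≤ Q) with hXQ | hXQ <;>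
    rw [hXP, hXQ] at hX <;> simp_all

theorem IsAtom.disjoint_or_eq_top_of_sup_eq_top (hP : IsAtom P) (hQ : IsAtom Q)
    (hPQ : P ⊔ Q = ⊤) {A B : L} (hAB : A ≠ B) : Disjoint A B ∨ A = ⊤ ∨ B = ⊤ := by
  rcases hP.eq_bot_or_eq_or_eq_or_eq_top_of_sup_eq_top hQ hPQ A with rfl | rfl | rfl | rfl <;>
    rcases hP.eq_bot_or_eq_or_eq_or_eq_top_of_sup_eq_top hQ hPQ B with rfl | rfl | rfl | rfl <;>
    first
    | exact absurd rfl hAB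
    | simp
    | exact Or.inl (hP.disjoint_of_ne hQ hAB)
    | exact Or.inl (hQ.disjoint_of_ne hP hAB)

end Lattice

section Measure

variable {L : Type*} [BooleanAlgebra L] {φ : L → ℝ}

theorem map_bot_eq_zero_of_additive (hadd : ∀ a b : L, Disjoint a b → φ (a ⊔ b) = φ a + φ b) :
    φ ⊥ = 0 := by
  simpa using hadd ⊥ ⊥ disjoint_bot_left

theorem map_pos_of_ne_bot (hnonneg : ∀ a : L, 0 ≤ φ a) (hfaithful : ∀ a : L, φ a = 0 → a = ⊥)
    {a : L} (ha : a ≠ ⊥) : 0 < φ a :=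
  (hnonneg a).lt_of_ne' fun h => ha (hfaithful a h)

theorem eq_top_of_map_top_le (hnonneg : ∀ a : L, 0 ≤ φ a)
    (hadd : ∀ a b : L, Disjoint a b → φ (a ⊔ b) = φ a + φ b)
    (hfaithful : ∀ a : L, φ a = 0 → a = ⊥) {a : L} (ha : φ ⊤ ≤ φ a) : a = ⊤ := by
  have hsplit : φ ⊤ = φ a + φ aᶜ := by rw [← sup_compl_eq_top, hadd a aᶜ disjoint_compl_right]
  have hcompl : φ aᶜ = 0 := le_antisymm (by linarith) (hnonneg aᶜ)
  exact compl_eq_bot.mp (hfaithful aᶜ hcompl)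

theorem map_inf_le_mul_of_disjoint (hnonneg : ∀ a : L, 0 ≤ φ a) (hbot : φ ⊥ = 0) {A B : L}
    (h : Disjoint A B) : φ (A ⊓ B) ≤ φ A * φ B := by
  rw [h.eq_bot, hbot]
  exact mul_nonneg (hnonneg A) (hnonneg B)

theorem mul_lt_map_inf_of_le {A B : L} (hA : 0 < φ A) (hB : φ B < 1) (hAB : A ≤ B) :
    φ A * φ B < φ (A ⊓ B) := by
  rw [inf_eq_left.mpr hAB]
  exact mul_lt_of_lt_one_right hA hB

theorem map_inf_le_mul_of_sup_eq_top (hnonneg : ∀ a : L, 0 ≤ φ a) (htop : φ ⊤ = 1)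
    (hadd : ∀ a b : L, Disjoint a b → φ (a ⊔ b) = φ a + φ b) {P Q : L} (hP : IsAtom P)
    (hQ : IsAtom Q) (hPQ : P ⊔ Q = ⊤) {A B : L} (hAB : A ≠ B) : φ (A ⊓ B) ≤ φ A * φ B := by
  rcases hP.disjoint_or_eq_top_of_sup_eq_top hQ hPQ hAB with h | rfl | rfl
  · exact map_inf_le_mul_of_disjoint hnonneg (map_bot_eq_zero_of_additive hadd) h
  · simp [htop]
  · simp [htop]

end Measure

/-- Boolean algebra with faithful φ and two distinct atoms P, Q:
there exist two distinct positively correlated elements iff φ(P ∨ Q) < 1. -/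
theorem correlation_iff_lt_one {L : Type*} [BooleanAlgebra L]
    (φ : L → ℝ)
    (hnonneg : ∀ a : L, 0 ≤ φ a)
    (htop : φ ⊤ = 1)
    (hadd : ∀ a b : L, Disjoint a b → φ (a ⊔ b) = φ a + φ b)
    (hfaithful : ∀ a : L, φ a = 0 → a = ⊥)
    (P Q : L) (hP : IsAtom P) (hQ : IsAtom Q) (hPQ : P ≠ Q) :
    (∃ A B : L, A ≠ B ∧ φ (A ⊓ B) > φ A * φ B) ↔ φ (P ⊔ Q) < 1 := by
  constructor
  · rintro ⟨A, B, hAB, hcorr⟩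
    by_contra! hle
    have hsup : P ⊔ Q = ⊤ := eq_top_of_map_top_le hnonneg hadd hfaithful (htop ▸ hle)
    exact (map_inf_le_mul_of_sup_eq_top hnonneg htop hadd hP hQ hsup hAB).not_gt hcorr
  · intro hlt
    have hQP : ¬Q ≤ P := fun h => hPQ ((hP.le_iff_eq hQ.1).mp h).symm
    exact ⟨P, P ⊔ Q, (left_lt_sup.mpr hQP).ne,
      mul_lt_map_inf_of_le (map_pos_of_ne_bot hnonneg hfaithful hP.1) hlt le_sup_left⟩
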